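/- arXiv:0911.1191 — 2 statements merged into one kernel-verified Lean document; each statement's English description precedes it below -/
import Mathlib

section
/- Let λ ≥ 1 and ρ > 0, and let Q and Q̃ be nonempty compact subsets of ℝ² each of diameter at most λρ. For any x ∈ Q and x̃ ∈ Q̃ with x ≠ x̃, the Lebesgue measure of the set Θ_{Q,Q̃} = {θ ∈ [−π/2, π/2] : proj_θ(Q) ∩ proj_θ(Q̃) ≠ ∅} is at most 2πλ · ρ / |x − x̃|, where |x − x̃| denotes the Euclidean distance between x and x̃. -/
/-!
If the projections of `Q` and `Q̃` in direction `θ` meet, then `|proj_θ (x - x̃)| ≤ 2λρ`.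
Writing `proj_θ (x - x̃) = |x - x̃| cos (θ - φ)`, this confines `θ` to the set where
`|cos (θ - φ)| ≤ c := 2λρ / |x - x̃|`. That set is `π`-periodic, so its measure in `[-π/2, π/2]`
equals its measure in `(φ, φ + π]`, where Jordan's inequality `2|v|/π ≤ |sin v|` places it in an
interval of length `π c` around `φ + π/2`.
-/

open MeasureTheory Set Metric Real

noncomputable section

/-- The orthogonal projection of the plane onto the line through the origin in direction
`(cos θ, sin θ)`, identified with `ℝ`. -/
def projTheta (θ : ℝ) (p : ℝ × ℝ) : ℝ := p.1 * Real.cos θ + p.2 * Real.sin θ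

/-- `K`, together with the Markov partition `I : Fin r → Set ℝ` and the expanding map `ψ`,
is a regular Cantor set of class `C^{1+α}`. -/
def IsCantorSystem (α : ℝ) (K : Set ℝ) (r : ℕ) (I : Fin r → Set ℝ) (ψ : ℝ → ℝ) : Prop :=
  0 < r ∧ IsCompact K ∧
  (∀ i, ∃ a b : ℝ, a ≤ b ∧ I i = Icc a b) ∧
  (∀ i, I i ⊆ Icc (0 : ℝ) 1) ∧
  Pairwise (Function.onFun Disjoint I) ∧
  (K ⊆ ⋃ i, I i) ∧
  (∀ i, frontier (I i) ⊆ K) ∧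
  (∃ U : Set ℝ, IsOpen U ∧ (⋃ i, I i) ⊆ U ∧
    (∀ x ∈ U, DifferentiableAt ℝ ψ x) ∧
    (∃ C : ℝ, ∀ x ∈ U, ∀ y ∈ U, |deriv ψ x - deriv ψ y| ≤ C * |x - y| ^ α) ∧
    (∀ x ∈ U, 1 < |deriv ψ x|)) ∧
  (∀ i, ∃ S : Finset (Fin r), ψ '' I i = convexHull ℝ (⋃ j ∈ S, I j)) ∧
  (∀ i, ∃ N : ℕ, ∀ n ≥ N, ψ^[n] '' (K ∩ I i) = K) ∧
  K = ⋂ n : ℕ, (ψ^[n]) ⁻¹' (⋃ i, I i)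

/-- `K` is a regular Cantor set of class `C^{1+α}`. -/
def IsRegularCantorSet (α : ℝ) (K : Set ℝ) : Prop :=
  ∃ (r : ℕ) (I : Fin r → Set ℝ) (ψ : ℝ → ℝ), IsCantorSystem α K r I ψ

/-- A ρ-decomposition of a set `K ⊆ ℝ²`: a finite collection of pairwise disjoint closed
rectangles, each intersecting `K`, whose union covers `K`, and all of whose side lengths lie
in `[ρ, λρ]`. -/
def IsRhoDecomposition (lam ρ : ℝ) (K : Set (ℝ × ℝ)) (F : Finset (Set (ℝ × ℝ))) : Prop :=
  (∀ Q ∈ F, ∃ a b c e : ℝ,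
      Q = Icc a b ×ˢ Icc c e ∧ ρ ≤ b - a ∧ b - a ≤ lam * ρ ∧ ρ ≤ e - c ∧ e - c ≤ lam * ρ) ∧
  (∀ Q ∈ F, (Q ∩ K).Nonempty) ∧
  (K ⊆ ⋃ Q ∈ F, Q) ∧
  (∀ Q ∈ F, ∀ Q' ∈ F, Q ≠ Q' → Disjoint Q Q')

/-- The number `N_F(θ)` of ordered pairs `(Q, Q̃) ∈ F × F` whose projections in
direction `θ` intersect. -/
def NPairs (F : Finset (Set (ℝ × ℝ))) (θ : ℝ) : ℕ :=
  {p : Set (ℝ × ℝ) × Set (ℝ × ℝ) |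
    p.1 ∈ F ∧ p.2 ∈ F ∧ (projTheta θ '' p.1 ∩ projTheta θ '' p.2).Nonempty}.ncard

theorem Function.Periodic.volume_preimage_inter_Ioc_eq {α : Type*} {f : ℝ → α} {T : ℝ}
    (hf : Function.Periodic f T) (hT : 0 < T) {B : Set α} (hB : MeasurableSet (f ⁻¹' B))
    (t s : ℝ) : volume (f ⁻¹' B ∩ Ioc t (t + T)) = volume (f ⁻¹' B ∩ Ioc s (s + T)) := by
  have : VAddInvariantMeasure (AddSubgroup.zmultiples T) ℝ volume :=
    ⟨fun g A _ => measure_preimage_add _ _ _⟩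
  refine (isAddFundamentalDomain_Ioc hT t).measure_set_eq (isAddFundamentalDomain_Ioc hT s) hB
    fun g => ?_
  ext x
  simp only [mem_preimage, hf.map_vadd_zmultiples]

lemma abs_cos_sub_periodic (φ : ℝ) : Function.Periodic (fun θ => |cos (θ - φ)|) π := by
  intro θ
  simp only [add_sub_right_comm, cos_add_pi, abs_neg]

lemma abs_le_of_abs_cos_add_pi_div_two_le {v c : ℝ} (hv : |v| ≤ π / 2)
    (h : |cos (v + π / 2)| ≤ c) : |v| ≤ π / 2 * c := by
  have jordan := mul_abs_le_abs_sin hv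
  rw [cos_add_pi_div_two, abs_neg] at h
  have : 2 / π * |v| ≤ c := jordan.trans h
  rw [div_mul_eq_mul_div, div_le_iff₀ pi_pos] at this
  linarith

lemma volume_abs_cos_sub_le (φ c : ℝ) :
    volume {θ ∈ Icc (-(π / 2)) (π / 2) | |cos (θ - φ)| ≤ c} ≤ ENNReal.ofReal (π * c) := by
  set A := (fun θ => |cos (θ - φ)|) ⁻¹' Iic c
  have hA : MeasurableSet A := measurableSet_Iic.preimage (by fun_prop)
  have hsub : A ∩ Ioc φ (φ + π) ⊆ Icc (φ + π / 2 - π / 2 * c) (φ + π / 2 + π / 2 * c) := by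
    rintro θ ⟨hθ, hlo, hhi⟩
    have := abs_le_of_abs_cos_add_pi_div_two_le (v := θ - φ - π / 2)
      (abs_le.mpr ⟨by linarith, by linarith⟩) (by simpa [A] using hθ)
    constructor <;> linarith [abs_le.mp this]
  calc volume {θ ∈ Icc (-(π / 2)) (π / 2) | |cos (θ - φ)| ≤ c}
      = volume (A ∩ Ioc (-(π / 2)) (-(π / 2) + π)) := by
        rw [show -(π / 2) + π = π / 2 by ring, inter_comm]
        exact measure_congr (Ioc_ae_eq_Icc.inter (ae_eq_refl A)).symm
    _ = volume (A ∩ Ioc φ (φ + π)) :=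
        (abs_cos_sub_periodic φ).volume_preimage_inter_Ioc_eq pi_pos hA _ _
    _ ≤ ENNReal.ofReal (π * c) := by
        refine (measure_mono hsub).trans ?_
        rw [volume_Icc]
        exact ENNReal.ofReal_le_ofReal (by linarith)

lemma projTheta_sub (θ : ℝ) (p q : ℝ × ℝ) :
    projTheta θ p - projTheta θ q = projTheta θ (p - q) := by
  simp only [projTheta, Prod.fst_sub, Prod.snd_sub]
  ring

lemma exists_projTheta_eq_mul_cos (v : ℝ × ℝ) :
    ∃ φ, ∀ θ, projTheta θ v = √(v.1 ^ 2 + v.2 ^ 2) * cos (θ - φ) := by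
  let z : ℂ := ⟨v.1, v.2⟩
  refine ⟨Complex.arg z, fun θ => ?_⟩
  have hre : ‖z‖ * cos (Complex.arg z) = v.1 := Complex.norm_mul_cos_arg z
  have him : ‖z‖ * sin (Complex.arg z) = v.2 := Complex.norm_mul_sin_arg z
  rw [← Complex.norm_eq_sqrt_sq_add_sq z, cos_sub, projTheta, ← hre, ← him]
  ring

lemma abs_projTheta_sub_le (θ : ℝ) (p q : ℝ × ℝ) :
    |projTheta θ p - projTheta θ q| ≤ √((p.1 - q.1) ^ 2 + (p.2 - q.2) ^ 2) := by
  obtain ⟨φ, hφ⟩ := exists_projTheta_eq_mul_cos (p - q)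
  rw [projTheta_sub, hφ, abs_mul, abs_of_nonneg (sqrt_nonneg _)]
  exact mul_le_of_le_one_right (sqrt_nonneg _) (abs_cos_le_one _)

lemma abs_projTheta_sub_le_of_inter_nonempty {θ r : ℝ} {Q Q' : Set (ℝ × ℝ)} {x x' : ℝ × ℝ}
    (hQ : ∀ p ∈ Q, ∀ q ∈ Q, √((p.1 - q.1) ^ 2 + (p.2 - q.2) ^ 2) ≤ r)
    (hQ' : ∀ p ∈ Q', ∀ q ∈ Q', √((p.1 - q.1) ^ 2 + (p.2 - q.2) ^ 2) ≤ r)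
    (hx : x ∈ Q) (hx' : x' ∈ Q') (h : (projTheta θ '' Q ∩ projTheta θ '' Q').Nonempty) :
    |projTheta θ x - projTheta θ x'| ≤ 2 * r := by
  obtain ⟨_, ⟨p, hp, rfl⟩, q, hq, hpq⟩ := h
  calc |projTheta θ x - projTheta θ x'|
      = |(projTheta θ x - projTheta θ p) + (projTheta θ q - projTheta θ x')| := by
        rw [hpq]; ring_nf
    _ ≤ |projTheta θ x - projTheta θ p| + |projTheta θ q - projTheta θ x'| := abs_add_le _ _
    _ ≤ 2 * r := by
        linarith [(abs_projTheta_sub_le θ x p).trans (hQ x hx p hp),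
          (abs_projTheta_sub_le θ q x').trans (hQ' q hq x' hx')]

lemma sq_add_sq_sub_pos {x x' : ℝ × ℝ} (h : x ≠ x') :
    0 < (x.1 - x'.1) ^ 2 + (x.2 - x'.2) ^ 2 := by
  contrapose! h
  ext <;> nlinarith [sq_nonneg (x.1 - x'.1), sq_nonneg (x.2 - x'.2)]

theorem measure_angles_projections_intersect_le_general
    (lam ρ : ℝ)
    (Q Q' : Set (ℝ × ℝ))
    (hQdiam : ∀ p ∈ Q, ∀ q ∈ Q,
      Real.sqrt ((p.1 - q.1) ^ 2 + (p.2 - q.2) ^ 2) ≤ lam * ρ)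
    (hQ'diam : ∀ p ∈ Q', ∀ q ∈ Q',
      Real.sqrt ((p.1 - q.1) ^ 2 + (p.2 - q.2) ^ 2) ≤ lam * ρ)
    (x x' : ℝ × ℝ) (hx : x ∈ Q) (hx' : x' ∈ Q') (hxx' : x ≠ x') :
    volume {θ ∈ Icc (-(π / 2)) (π / 2) |
        (projTheta θ '' Q ∩ projTheta θ '' Q').Nonempty} ≤
      ENNReal.ofReal
        (2 * π * lam * ρ / Real.sqrt ((x.1 - x'.1) ^ 2 + (x.2 - x'.2) ^ 2)) := by
  obtain ⟨φ, hφ⟩ := exists_projTheta_eq_mul_cos (x - x')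
  simp only [Prod.fst_sub, Prod.snd_sub] at hφ
  set d := √((x.1 - x'.1) ^ 2 + (x.2 - x'.2) ^ 2)
  have hd : 0 < d := sqrt_pos.mpr (sq_add_sq_sub_pos hxx')
  have hsub : {θ ∈ Icc (-(π / 2)) (π / 2) | (projTheta θ '' Q ∩ projTheta θ '' Q').Nonempty} ⊆
      {θ ∈ Icc (-(π / 2)) (π / 2) | |cos (θ - φ)| ≤ 2 * lam * ρ / d} := by
    rintro θ ⟨hθ, hne⟩
    refine ⟨hθ, ?_⟩
    have := abs_projTheta_sub_le_of_inter_nonempty hQdiam hQ'diam hx hx' hne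
    rw [projTheta_sub, hφ, abs_mul, abs_of_pos hd] at this
    rw [le_div_iff₀ hd]
    linarith
  calc _ ≤ _ := measure_mono hsub
    _ ≤ _ := volume_abs_cos_sub_le φ _
    _ = _ := by congr 1; ring

/-- **Transversality estimate.** If `Q, Q̃ ⊆ ℝ²` are nonempty compact sets of (Euclidean)
diameter at most `λρ`, and `x ∈ Q`, `x̃ ∈ Q̃` are distinct, then the set of angles
`θ ∈ [-π/2, π/2]` for which `proj_θ(Q)` and `proj_θ(Q̃)` intersect has Lebesgue measure at
most `2πλρ / |x - x̃|`. -/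
theorem measure_angles_projections_intersect_le
    (lam ρ : ℝ) (hlam : 1 ≤ lam) (hρ : 0 < ρ)
    (Q Q' : Set (ℝ × ℝ)) (hQne : Q.Nonempty) (hQ'ne : Q'.Nonempty)
    (hQc : IsCompact Q) (hQ'c : IsCompact Q')
    (hQdiam : ∀ p ∈ Q, ∀ q ∈ Q,
      Real.sqrt ((p.1 - q.1) ^ 2 + (p.2 - q.2) ^ 2) ≤ lam * ρ)
    (hQ'diam : ∀ p ∈ Q', ∀ q ∈ Q',
      Real.sqrt ((p.1 - q.1) ^ 2 + (p.2 - q.2) ^ 2) ≤ lam * ρ)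
    (x x' : ℝ × ℝ) (hx : x ∈ Q) (hx' : x' ∈ Q') (hxx' : x ≠ x') :
    volume {θ ∈ Icc (-(π / 2)) (π / 2) |
        (projTheta θ '' Q ∩ projTheta θ '' Q').Nonempty} ≤
      ENNReal.ofReal
        (2 * π * lam * ρ / Real.sqrt ((x.1 - x'.1) ^ 2 + (x.2 - x'.2) ^ 2)) :=
  measure_angles_projections_intersect_le_general lam ρ Q Q' hQdiam hQ'diam x x' hx hx' hxx'

end
end

section
/- Let (K, ψ) be a regular Cantor set of class C¹ (ψ differentiable with continuous derivative, expanding) with Markov partition {I₁,…,I_r}, and let λ = sup{|ψ'(x)| : x ∈ I₁ ∪ ⋯ ∪ I_r}. Then for every sufficiently small ρ > 0 there exists a finite collection of pairwise disjoint closed intervals in ℝ, each intersecting K, whose union covers K, and whose lengths all lie in the interval [ρ, λρ]. -/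
/-! Since `ψ` maps `K` into itself and expands it by a factor `μ > 1`, any interval inside `K`
would be stretched into arbitrarily long intervals inside the bounded set `K`; hence `K` has
empty interior. A compact set with empty interior is then covered greedily: from its leftmost
point `a`, cut at a point of the complement between `a + ρ` and `a + λρ` (possible as `λ > 1`),
and repeat on the part to the right of the cut. -/

open MeasureTheory Set Metric Real

noncomputable section

/-- `K`, together with the Markov partition `I : Fin r → Set ℝ` and the expanding map `ψ`,
is a regular Cantor set of class `C¹`. -/
def IsCantorSystemC1 (K : Set ℝ) (r : ℕ) (I : Fin r → Set ℝ) (ψ : ℝ → ℝ) : Prop :=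
  0 < r ∧ IsCompact K ∧
  (∀ i, ∃ a b : ℝ, a ≤ b ∧ I i = Icc a b) ∧
  (∀ i, I i ⊆ Icc (0 : ℝ) 1) ∧
  Pairwise (Function.onFun Disjoint I) ∧
  (K ⊆ ⋃ i, I i) ∧
  (∀ i, frontier (I i) ⊆ K) ∧
  (∃ U : Set ℝ, IsOpen U ∧ (⋃ i, I i) ⊆ U ∧
    (∀ x ∈ U, DifferentiableAt ℝ ψ x) ∧
    ContinuousOn (deriv ψ) U ∧
    (∀ x ∈ U, 1 < |deriv ψ x|)) ∧
  (∀ i, ∃ S : Finset (Fin r), ψ '' I i = convexHull ℝ (⋃ j ∈ S, I j)) ∧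
  (∀ i, ∃ N : ℕ, ∀ n ≥ N, ψ^[n] '' (K ∩ I i) = K) ∧
  K = ⋂ n : ℕ, (ψ^[n]) ⁻¹' (⋃ i, I i)

section Expanding

variable {K : Set ℝ} {f : ℝ → ℝ} {μ : ℝ}

lemma exists_Icc_subset_of_le_abs_deriv (hf : MapsTo f K K)
    (hdiff : ∀ x ∈ K, DifferentiableAt ℝ f x) (hder : ∀ x ∈ K, μ ≤ |deriv f x|)
    {a b : ℝ} (hab : a < b) (hK : Icc a b ⊆ K) :
    ∃ a' b', μ * (b - a) ≤ b' - a' ∧ Icc a' b' ⊆ K := by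
  have hcont : ContinuousOn f (Icc a b) := fun x hx =>
    (hdiff x (hK hx)).continuousAt.continuousWithinAt
  obtain ⟨c, hc, hslope⟩ := exists_deriv_eq_slope f hab hcont fun x hx =>
    (hdiff x (hK (Ioo_subset_Icc_self hx))).differentiableWithinAt
  refine ⟨min (f a) (f b), max (f a) (f b), ?_, ?_⟩
  · have hfab : f b - f a = deriv f c * (b - a) := by
      rw [hslope, div_mul_cancel₀ _ (sub_pos.2 hab).ne']
    calc μ * (b - a) ≤ |deriv f c| * (b - a) :=
          mul_le_mul_of_nonneg_right (hder c (hK (Ioo_subset_Icc_self hc))) (sub_pos.2 hab).le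
      _ = |f b - f a| := by rw [hfab, abs_mul, abs_of_pos (sub_pos.2 hab)]
      _ = max (f a) (f b) - min (f a) (f b) := (max_sub_min_eq_abs _ _).symm
  · calc Icc (min (f a) (f b)) (max (f a) (f b)) = uIcc (f a) (f b) := rfl
      _ ⊆ f '' uIcc a b := intermediate_value_uIcc (by rwa [uIcc_of_le hab.le])
      _ ⊆ K := by
        rw [uIcc_of_le hab.le]
        exact (image_mono hK).trans hf.image_subset

theorem interior_eq_empty_of_le_abs_deriv (hK : Bornology.IsBounded K) (hf : MapsTo f K K)
    (hdiff : ∀ x ∈ K, DifferentiableAt ℝ f x) (hμ : 1 < μ) (hder : ∀ x ∈ K, μ ≤ |deriv f x|) :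
    interior K = ∅ := by
  by_contra hne
  obtain ⟨a, b, hab, hIoo⟩ := isOpen_interior.exists_Ioo_subset (nonempty_iff_ne_empty.2 hne)
  obtain ⟨c, hac, hcb⟩ := exists_between hab
  obtain ⟨d, hcd, hdb⟩ := exists_between hcb
  have hIcc : Icc c d ⊆ K :=
    (Icc_subset_Ioo hac hdb).trans (hIoo.trans interior_subset)
  have hlong : ∀ n : ℕ, ∃ a' b', μ ^ n * (d - c) ≤ b' - a' ∧ Icc a' b' ⊆ K := by
    intro n
    induction n with
    | zero => exact ⟨c, d, by simp, hIcc⟩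
    | succ n ih =>
      obtain ⟨a', b', hlen, hsub⟩ := ih
      have hpos : 0 < μ ^ n * (d - c) := by positivity
      obtain ⟨a'', b'', hlen', hsub'⟩ :=
        exists_Icc_subset_of_le_abs_deriv hf hdiff hder (by linarith) hsub
      refine ⟨a'', b'', le_trans ?_ hlen', hsub'⟩
      rw [pow_succ', mul_assoc]
      exact mul_le_mul_of_nonneg_left hlen (by linarith)
  obtain ⟨n, hn⟩ := pow_unbounded_of_one_lt (diam K / (d - c)) hμ
  obtain ⟨a', b', hlen, hsub⟩ := hlong n
  have hpos : 0 < μ ^ n * (d - c) := by positivity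
  have : b' - a' ≤ diam K := by
    rw [← Real.diam_Icc (by linarith)]
    exact diam_mono hsub hK
  rw [div_lt_iff₀ (sub_pos.2 hcd)] at hn
  linarith

end Expanding

structure IsRhoDecomposition_s12 (C : Set ℝ) (ρ lam : ℝ) (F : Finset (Set ℝ)) : Prop where
  isIcc : ∀ J ∈ F, ∃ a b : ℝ, a ≤ b ∧ J = Icc a b ∧ ρ ≤ b - a ∧ b - a ≤ lam * ρ
  inter_nonempty : ∀ J ∈ F, (J ∩ C).Nonempty
  subset_biUnion : C ⊆ ⋃ J ∈ F, J
  disjoint : ∀ J ∈ F, ∀ J' ∈ F, J ≠ J' → Disjoint J J'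

namespace IsRhoDecomposition_s12

variable {C C' : Set ℝ} {ρ lam : ℝ} {F : Finset (Set ℝ)}

lemma empty : IsRhoDecomposition_s12 ∅ ρ lam ∅ :=
  ⟨by simp, by simp, by simp, by simp⟩

lemma insert_Icc (hF : IsRhoDecomposition_s12 C' ρ lam F) {a t : ℝ} (ha : a ∈ C) (hat : a ≤ t)
    (hρ : ρ ≤ t - a) (hlam : t - a ≤ lam * ρ) (hC : C ⊆ Icc a t ∪ C') (hC' : C' ⊆ C)
    (hFt : ∀ J ∈ F, J ⊆ Ioi t) : IsRhoDecomposition_s12 C ρ lam (insert (Icc a t) F) := by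
  have hdisj : ∀ J ∈ F, Disjoint (Icc a t) J := fun J hJ =>
    disjoint_left.2 fun x hx hxJ => (hFt J hJ hxJ).not_ge hx.2
  refine ⟨?_, ?_, ?_, ?_⟩
  · simp only [Finset.forall_mem_insert]
    exact ⟨⟨a, t, hat, rfl, hρ, hlam⟩, hF.isIcc⟩
  · simp only [Finset.forall_mem_insert]
    exact ⟨⟨a, ⟨le_rfl, hat⟩, ha⟩, fun J hJ => (hF.inter_nonempty J hJ).mono
      (inter_subset_inter_right J hC')⟩
  · rw [Finset.set_biUnion_insert]
    exact hC.trans (union_subset_union_right _ hF.subset_biUnion)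
  · simp only [Finset.forall_mem_insert]
    exact ⟨⟨fun h => (h rfl).elim, fun J hJ _ => hdisj J hJ⟩,
      fun J hJ => ⟨fun _ => (hdisj J hJ).symm, hF.disjoint J hJ⟩⟩

end IsRhoDecomposition_s12

section Greedy

variable {ρ lam : ℝ}

/-- The extra conclusion, that every interval starts at a point of `C`, keeps the intervals
built in the recursion disjoint from the first one. -/
lemma exists_isRhoDecomposition_of_forall_lt_add (hρ : 0 < ρ) (hlam : 1 < lam) (n : ℕ) :
    ∀ C : Set ℝ, IsCompact C → interior C = ∅ → (∀ x ∈ C, ∀ y ∈ C, y < x + n * ρ) →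
      ∃ F, IsRhoDecomposition_s12 C ρ lam F ∧ ∀ J ∈ F, ∃ x ∈ C, J ⊆ Ici x := by
  induction n with
  | zero =>
    intro C _ _ hC
    have hCe : C = ∅ := eq_empty_of_forall_notMem fun x hx => by simpa using hC x hx x hx
    exact ⟨∅, hCe ▸ IsRhoDecomposition_s12.empty, by simp⟩
  | succ n ih =>
    intro C hC hint hlen
    rcases C.eq_empty_or_nonempty with rfl | hne
    · exact ⟨∅, IsRhoDecomposition_s12.empty, by simp⟩
    set a := sInf C
    have ha : a ∈ C := hC.sInf_mem hne
    obtain ⟨t, htC, hat, hta⟩ := (interior_eq_empty_iff_dense_compl.1 hint).exists_between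
      (show a + ρ < a + lam * ρ by nlinarith)
    set C' := C ∩ Ici t
    have hC't : ∀ x ∈ C', t < x := fun x hx =>
      lt_of_le_of_ne hx.2 fun h => htC (h ▸ hx.1)
    obtain ⟨F, hF, hFC'⟩ := ih C' (hC.inter_right isClosed_Ici)
      (subset_empty_iff.1 (hint ▸ interior_mono inter_subset_left))
      fun x hx y hy => by push_cast at hlen; linarith [hlen a ha y hy.1, hC't x hx]
    refine ⟨insert (Icc a t) F, hF.insert_Icc ha (by linarith) (by linarith) (by linarith)
      ?_ inter_subset_left ?_, ?_⟩
    · intro x hx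
      rcases le_or_gt x t with hxt | hxt
      · exact Or.inl ⟨csInf_le hC.bddBelow hx, hxt⟩
      · exact Or.inr ⟨hx, hxt.le⟩
    · intro J hJ
      obtain ⟨x, hx, hJx⟩ := hFC' J hJ
      exact hJx.trans (Ici_subset_Ioi.2 (hC't x hx))
    · simp only [Finset.forall_mem_insert]
      exact ⟨⟨a, ha, fun x hx => hx.1⟩, fun J hJ =>
        let ⟨x, hx, hJx⟩ := hFC' J hJ; ⟨x, hx.1, hJx⟩⟩

theorem IsCompact.exists_isRhoDecomposition {C : Set ℝ} (hC : IsCompact C)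
    (hint : interior C = ∅) (hρ : 0 < ρ) (hlam : 1 < lam) :
    ∃ F, IsRhoDecomposition_s12 C ρ lam F := by
  obtain ⟨m, hm⟩ := hC.bddBelow
  obtain ⟨M, hM⟩ := hC.bddAbove
  obtain ⟨n, hn⟩ := exists_nat_gt ((M - m) / ρ)
  rw [div_lt_iff₀ hρ] at hn
  obtain ⟨F, hF, -⟩ := exists_isRhoDecomposition_of_forall_lt_add hρ hlam n C hC hint
    fun x hx y hy => by linarith [hm hx, hM hy]
  exact ⟨F, hF⟩

end Greedy

lemma mapsTo_iInter_preimage_iterate {α : Type*} (f : α → α) (S : Set α) :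
    MapsTo f (⋂ n : ℕ, f^[n] ⁻¹' S) (⋂ n : ℕ, f^[n] ⁻¹' S) := fun x hx => by
  simp only [mem_iInter, mem_preimage] at hx ⊢
  intro n
  simpa only [Function.iterate_succ_apply] using hx (n + 1)

/-- **Existence of `ρ`-decompositions.** If `(K, ψ)` is a regular Cantor set of class `C¹`
with Markov partition `I₁, …, I_r` and `λ = sup {|ψ'(x)| : x ∈ I₁ ∪ ⋯ ∪ I_r}`, then for
every sufficiently small `ρ > 0` there is a finite collection of pairwise disjoint closed
intervals, each intersecting `K`, covering `K`, all of whose lengths lie in `[ρ, λρ]`. -/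
theorem exists_rho_decomposition
    (K : Set ℝ) (r : ℕ) (I : Fin r → Set ℝ) (ψ : ℝ → ℝ)
    (h : IsCantorSystemC1 K r I ψ)
    (lam : ℝ) (hlam : lam = sSup ((fun x => |deriv ψ x|) '' ⋃ i, I i)) :
    ∃ ρ₀ : ℝ, 0 < ρ₀ ∧ ∀ ρ : ℝ, 0 < ρ → ρ ≤ ρ₀ →
      ∃ F : Finset (Set ℝ),
        (∀ J ∈ F, ∃ a b : ℝ, a ≤ b ∧ J = Icc a b ∧ ρ ≤ b - a ∧ b - a ≤ lam * ρ) ∧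
        (∀ J ∈ F, (J ∩ K).Nonempty) ∧
        (K ⊆ ⋃ J ∈ F, J) ∧
        (∀ J ∈ F, ∀ J' ∈ F, J ≠ J' → Disjoint J J') := by
  obtain ⟨hr, hKc, hIcc, -, -, hKI, -, ⟨U, -, hIU, hdiff, hdcont, hexp⟩, -, -, hKeq⟩ := h
  have hKU : K ⊆ U := hKI.trans hIU
  obtain ⟨μ, hμ, hμK⟩ :=
    hKc.exists_forall_le' (hdcont.mono hKU).abs fun x hx => hexp x (hKU hx)
  have hint : interior K = ∅ :=
    interior_eq_empty_of_le_abs_deriv hKc.isBounded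
      (hKeq ▸ mapsTo_iInter_preimage_iterate ψ _) (fun x hx => hdiff x (hKU hx)) hμ hμK
  have hlam1 : 1 < lam := by
    obtain ⟨a, b, hab, hI0⟩ := hIcc ⟨0, hr⟩
    have ha : a ∈ ⋃ i, I i := mem_iUnion.2 ⟨⟨0, hr⟩, hI0 ▸ left_mem_Icc.2 hab⟩
    have hIc : IsCompact (⋃ i, I i) := isCompact_iUnion fun i => by
      obtain ⟨a, b, -, hI⟩ := hIcc i
      exact hI ▸ isCompact_Icc
    rw [hlam]
    exact (hexp a (hIU ha)).trans_le <| le_csSup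
      (hIc.image_of_continuousOn (hdcont.mono hIU).abs).bddAbove (mem_image_of_mem _ ha)
  refine ⟨1, one_pos, fun ρ hρ _ => ?_⟩
  obtain ⟨F, hF⟩ := hKc.exists_isRhoDecomposition hint hρ hlam1
  exact ⟨F, hF.isIcc, hF.inter_nonempty, hF.subset_biUnion, hF.disjoint⟩

end
end
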